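/- Let Γ be a group acting by homeomorphisms on a compact metric space Z with at least 3 points. Then the following are equivalent: (i) the diagonal action of Γ on Trip(Z) is properly discontinuous; (ii) for every sequence (γ_n) in Γ diverging to infinity there exist points z₊, z₋ ∈ Z and a subsequence (γ_{n_k}) such that the maps γ_{n_k} converge to the constant map with value z₊ uniformly on every compact subset of Z ∖ {z₋}. -/

import Mathlib

open Filter Metric Set Topology

/-!
Under either condition, if `γₙ → ∞`, `pₙ → P ∈ Trip(Z)` and `γₙ • pₙ → Q`, then `Q ∉ Trip(Z)`;
under (i) because the `pₙ`, the `γₙ • pₙ` and their limits form a compact subset of `Trip(Z)`.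
If (i) fails, compactness provides such sequences with `Q ∈ Trip(Z)`, and (ii) excludes them:
two coordinates of `P` avoid the repelling point `z₋`, so the corresponding coordinates of `Q`
both equal `z₊`. For (i) ⇒ (ii), fix five points of `Z`; along a subsequence their images under
`γₙ` converge, and by (i) the limits take at most two values, so three of the points are attracted
to a common `z₊`. Likewise three points are attracted to `z₋` by `γₙ⁻¹`. If `xₙ → x ≠ z₋` and
`γₙ xₙ → y ≠ z₊`, choose `u` among the first three points avoiding `x, z₋` and `w` among the last
three avoiding `y, z₊`: the triples `(xₙ, u, γₙ⁻¹ w) → (x, u, z₋)` are mapped to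
`(γₙ xₙ, γₙ u, w) → (y, z₊, w)`, contradicting (i). Uniform convergence follows by compactness.
-/

/-- A sequence in a group diverges to infinity if it eventually leaves every finite subset. -/
def DivergesToInfinity {G : Type*} (γ : ℕ → G) : Prop :=
  ∀ F : Finset G, {n : ℕ | γ n ∈ F}.Finite

/-- The space of triples of pairwise distinct points. -/
def tripSet (Z : Type*) : Set (Z × Z × Z) :=
  {p | p.1 ≠ p.2.1 ∧ p.1 ≠ p.2.2 ∧ p.2.1 ≠ p.2.2}

namespace DivergesToInfinity

variable {G : Type*} {γ : ℕ → G}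

theorem comp_injective (hγ : DivergesToInfinity γ) {σ : ℕ → ℕ} (hσ : Function.Injective σ) :
    DivergesToInfinity (fun n => γ (σ n)) :=
  fun F => Set.Finite.preimage (f := σ) hσ.injOn (hγ F)

theorem inv [Group G] (hγ : DivergesToInfinity γ) : DivergesToInfinity (fun n => (γ n)⁻¹) := by
  classical
  intro F
  refine (hγ (F.image (·⁻¹))).subset fun n hn => ?_
  exact Finset.mem_image.2 ⟨_, hn, inv_inv _⟩

theorem exists_notMem (hγ : DivergesToInfinity γ) {S : Set G} (hS : S.Finite) :
    ∃ n, γ n ∉ S := by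
  by_contra! h
  refine Set.infinite_univ (hγ hS.toFinset |>.subset fun n _ => ?_)
  exact hS.mem_toFinset.2 (h n)

end DivergesToInfinity

theorem divergesToInfinity_of_injective {G : Type*} {γ : ℕ → G} (hγ : Function.Injective γ) :
    DivergesToInfinity γ :=
  fun F => F.finite_toSet.preimage hγ.injOn

section Triples

variable {Z : Type*}

theorem smul_mem_tripSet {G : Type*} [Group G] [MulAction G Z] (g : G) {p : Z × Z × Z}
    (hp : p ∈ tripSet Z) : g • p ∈ tripSet Z := by
  obtain ⟨h₁, h₂, h₃⟩ := hp
  exact ⟨(smul_left_cancel_iff g).not.2 h₁, (smul_left_cancel_iff g).not.2 h₂,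
    (smul_left_cancel_iff g).not.2 h₃⟩

theorem isOpen_tripSet [TopologicalSpace Z] [T2Space Z] : IsOpen (tripSet Z) :=
  (isOpen_ne_fun continuous_fst continuous_snd.fst).inter
    ((isOpen_ne_fun continuous_fst continuous_snd.snd).inter
      (isOpen_ne_fun continuous_snd.fst continuous_snd.snd))

theorem notMem_tripSet_of_imp {P Q : Z × Z × Z} {zp zm : Z} (hP : P ∈ tripSet Z)
    (h₁ : P.1 ≠ zm → Q.1 = zp) (h₂ : P.2.1 ≠ zm → Q.2.1 = zp) (h₃ : P.2.2 ≠ zm → Q.2.2 = zp) :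
    Q ∉ tripSet Z := by
  obtain ⟨hP₁, hP₂, hP₃⟩ := hP
  rintro ⟨hQ₁, hQ₂, hQ₃⟩
  by_cases h₁zm : P.1 = zm
  · exact hQ₃ ((h₂ fun h => hP₁ (h₁zm.trans h.symm)).trans
      (h₃ fun h => hP₂ (h₁zm.trans h.symm)).symm)
  by_cases h₂zm : P.2.1 = zm
  · exact hQ₂ ((h₁ h₁zm).trans (h₃ fun h => hP₃ (h₂zm.trans h.symm)).symm)
  exact hQ₁ ((h₁ h₁zm).trans (h₂ h₂zm).symm)

end Triples

theorem exists_mem_ne_ne_of_two_lt_card {α : Type*} [DecidableEq α] {T : Finset α}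
    (hT : 2 < T.card) (p q : α) : ∃ u ∈ T, u ≠ p ∧ u ≠ q := by
  obtain ⟨u, hu, hpq⟩ := Finset.exists_mem_notMem_of_card_lt_card (Finset.card_le_two.trans_lt hT)
  simp only [Finset.mem_insert, Finset.mem_singleton, not_or] at hpq
  exact ⟨u, hu, hpq⟩

theorem exists_two_lt_card_fiber {ι α : Type*} [Fintype ι] [DecidableEq α] (f : ι → α)
    (hι : 4 < Fintype.card ι) (hf : ∀ i j k, f i ≠ f j → f i ≠ f k → f j ≠ f k → False) :
    ∃ a, 2 < (Finset.univ.filter (f · = a)).card := by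
  have himage : (Finset.univ.image f).card ≤ 2 := by
    by_contra! h
    obtain ⟨_, _, _, hi, hj, hk, hij, hik, hjk⟩ := Finset.two_lt_card_iff.1 h
    obtain ⟨i, -, rfl⟩ := Finset.mem_image.1 hi
    obtain ⟨j, -, rfl⟩ := Finset.mem_image.1 hj
    obtain ⟨k, -, rfl⟩ := Finset.mem_image.1 hk
    exact hf i j k hij hik hjk
  obtain ⟨a, -, ha⟩ := Finset.exists_lt_card_fiber_of_mul_lt_card_of_maps_to
    (fun i _ => Finset.mem_image_of_mem f (Finset.mem_univ i))
    (by rw [Finset.card_univ]; omega : (Finset.univ.image f).card * 2 < Finset.univ.card)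
  exact ⟨a, ha⟩

theorem tendstoUniformlyOn_const_of_forall_subseq {X Y : Type*} [TopologicalSpace X]
    [FirstCountableTopology X] [PseudoMetricSpace Y] [CompactSpace Y] {F : ℕ → X → Y}
    {K : Set X} (hK : IsCompact K) {c : Y}
    (h : ∀ ψ : ℕ → ℕ, StrictMono ψ → ∀ (x : ℕ → X) (a : X) (y : Y), a ∈ K →
      Tendsto x atTop (𝓝 a) → Tendsto (fun n => F (ψ n) (x n)) atTop (𝓝 y) → y = c) :
    TendstoUniformlyOn F (fun _ => c) atTop K := by
  rw [Metric.tendstoUniformlyOn_iff]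
  by_contra! hfar
  obtain ⟨ε, hε, hfreq⟩ := hfar
  obtain ⟨ψ₁, hψ₁, hfar⟩ := extraction_of_frequently_atTop hfreq
  choose x hxK hxε using hfar
  obtain ⟨⟨a, y⟩, ⟨haK, -⟩, ψ₂, hψ₂, hlim⟩ := (hK.prod isCompact_univ).tendsto_subseq
    (x := fun n => (x n, F (ψ₁ n) (x n))) fun n => ⟨hxK n, mem_univ _⟩
  have hx := hlim.fst_nhds
  have hy := hlim.snd_nhds
  have hyc : y = c := h (ψ₁ ∘ ψ₂) (hψ₁.comp hψ₂) (x ∘ ψ₂) a y haK hx hy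
  have hεy : ε ≤ dist c y := ge_of_tendsto' (tendsto_const_nhds.dist hy) fun n => hxε (ψ₂ n)
  rw [hyc, dist_self] at hεy
  exact hε.not_ge hεy

theorem tendsto_apply_of_tendstoUniformlyOn_compl_singleton {ι X Y : Type*} [TopologicalSpace X]
    [T1Space X] [LocallyCompactSpace X] [UniformSpace Y] {F : ι → X → Y} {l : Filter ι}
    {b : X} {c : Y}
    (hF : ∀ K, IsCompact K → K ⊆ {b}ᶜ → TendstoUniformlyOn F (fun _ => c) l K)
    {x : ι → X} {a : X} (hx : Tendsto x l (𝓝 a)) (ha : a ≠ b) :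
    Tendsto (fun i => F i (x i)) l (𝓝 c) :=
  ((tendstoLocallyUniformlyOn_iff_forall_isCompact isOpen_compl_singleton).2
    fun K hKb hK => hF K hK hKb).tendsto_comp continuousWithinAt_const ha
    (by rwa [isOpen_compl_singleton.nhdsWithin_eq ha])

open scoped Pointwise

def ProperlyDiscontinuousOnTriples (G Z : Type*) [Monoid G] [TopologicalSpace Z]
    [MulAction G Z] : Prop :=
  ∀ K ⊆ tripSet Z, IsCompact K → {γ : G | (γ • K ∩ K).Nonempty}.Finite

section ConvergenceSequences

variable {G Z : Type*} [Monoid G] [MulAction G Z]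

theorem notMem_tripSet_of_tendstoUniformlyOn [UniformSpace Z] [T2Space Z] [LocallyCompactSpace Z]
    {g : ℕ → G} {zp zm : Z}
    (hU : ∀ K : Set Z, IsCompact K → K ⊆ {zm}ᶜ →
      TendstoUniformlyOn (fun n z => g n • z) (fun _ => zp) atTop K)
    {p : ℕ → Z × Z × Z} {P Q : Z × Z × Z} (hp : Tendsto p atTop (𝓝 P)) (hP : P ∈ tripSet Z)
    (hq : Tendsto (fun n => g n • p n) atTop (𝓝 Q)) : Q ∉ tripSet Z := by
  have hp₂ := hp.snd_nhds
  have hq₂ := hq.snd_nhds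
  refine notMem_tripSet_of_imp (zp := zp) (zm := zm) hP (fun h => ?_) (fun h => ?_) (fun h => ?_)
  · exact tendsto_nhds_unique hq.fst_nhds
      (tendsto_apply_of_tendstoUniformlyOn_compl_singleton hU hp.fst_nhds h)
  · exact tendsto_nhds_unique hq₂.fst_nhds
      (tendsto_apply_of_tendstoUniformlyOn_compl_singleton hU hp₂.fst_nhds h)
  · exact tendsto_nhds_unique hq₂.snd_nhds
      (tendsto_apply_of_tendstoUniformlyOn_compl_singleton hU hp₂.snd_nhds h)

theorem ProperlyDiscontinuousOnTriples.of_forall_exists_subseq [MetricSpace Z]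
    [LocallyCompactSpace Z]
    (h : ∀ γ : ℕ → G, DivergesToInfinity γ →
      ∃ (zp zm : Z) (k : ℕ → ℕ), StrictMono k ∧
        ∀ K : Set Z, IsCompact K → K ⊆ {zm}ᶜ →
          TendstoUniformlyOn (fun i z => γ (k i) • z) (fun _ => zp) atTop K) :
    ProperlyDiscontinuousOnTriples G Z := by
  intro K hKtrip hK
  by_contra hS
  let e := Set.Infinite.natEmbedding _ hS
  obtain ⟨zp, zm, k, -, hU⟩ :=
    h _ (divergesToInfinity_of_injective (Subtype.val_injective.comp e.injective))
  have (n : ℕ) : ∃ p ∈ K, (e n : G) • p ∈ K := by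
    obtain ⟨_, ⟨p, hp, rfl⟩, hγp⟩ := (e n).2
    exact ⟨p, hp, hγp⟩
  choose p hpK hγpK using this
  obtain ⟨⟨P, Q⟩, ⟨hP, hQ⟩, ψ, hψ, hlim⟩ := (hK.prod hK).tendsto_subseq
    (x := fun n => (p (k n), (e (k n) : G) • p (k n))) fun n => ⟨hpK _, hγpK _⟩
  exact notMem_tripSet_of_tendstoUniformlyOn
    (fun K hK hKzm u hu => hψ.tendsto_atTop.eventually (hU K hK hKzm u hu))
    hlim.fst_nhds (hKtrip hP) hlim.snd_nhds (hKtrip hQ)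

end ConvergenceSequences

section ConvergenceAction

variable {G Z : Type*} [Group G] [MulAction G Z]

namespace ProperlyDiscontinuousOnTriples

theorem limit_notMem_tripSet [TopologicalSpace Z] [T2Space Z]
    (hPD : ProperlyDiscontinuousOnTriples G Z) {γ : ℕ → G} (hγ : DivergesToInfinity γ)
    {p : ℕ → Z × Z × Z} {P Q : Z × Z × Z} (hp : Tendsto p atTop (𝓝 P)) (hP : P ∈ tripSet Z)
    (hq : Tendsto (fun n => γ n • p n) atTop (𝓝 Q)) : Q ∉ tripSet Z := by
  intro hQ
  obtain ⟨N, hN⟩ := eventually_atTop.1 (hp.eventually (isOpen_tripSet.mem_nhds hP))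
  -- `K` has to lie in `tripSet Z`, so only a tail of `p` is used.
  have hp' := (tendsto_add_atTop_iff_nat N).2 hp
  have hq' := (tendsto_add_atTop_iff_nat N).2 hq
  set K := insert P (range fun n => p (n + N)) ∪ insert Q (range fun n => γ (n + N) • p (n + N))
  have hKtrip : K ⊆ tripSet Z := by
    rintro _ ((rfl | ⟨n, rfl⟩) | (rfl | ⟨n, rfl⟩))
    exacts [hP, hN _ (Nat.le_add_left N n), hQ, smul_mem_tripSet _ (hN _ (Nat.le_add_left N n))]
  obtain ⟨n, hn⟩ := (hγ.comp_injective (add_left_injective N)).exists_notMem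
    (hPD K hKtrip (hp'.isCompact_insert_range.union hq'.isCompact_insert_range))
  exact hn ⟨_, ⟨_, .inl (.inr ⟨n, rfl⟩), rfl⟩, .inr (.inr ⟨n, rfl⟩)⟩

theorem finite [Finite Z] [TopologicalSpace Z] (hPD : ProperlyDiscontinuousOnTriples G Z)
    (hZ : (tripSet Z).Nonempty) : Finite G := by
  obtain ⟨p, hp⟩ := hZ
  refine Set.finite_univ_iff.1 ((hPD _ subset_rfl (Set.toFinite _).isCompact).subset ?_)
  exact fun γ _ => ⟨γ • p, ⟨p, hp, rfl⟩, smul_mem_tripSet γ hp⟩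

variable [MetricSpace Z]

theorem exists_subseq_tendsto_of_embedding [CompactSpace Z]
    (hPD : ProperlyDiscontinuousOnTriples G Z) {γ : ℕ → G} (hγ : DivergesToInfinity γ)
    {ι : Type*} [Fintype ι] (t : ι ↪ Z) (hι : 4 < Fintype.card ι) :
    ∃ φ : ℕ → ℕ, StrictMono φ ∧ ∃ (zp : Z) (T : Finset Z), 2 < T.card ∧
      ∀ z ∈ T, Tendsto (fun n => γ (φ n) • z) atTop (𝓝 zp) := by
  classical
  obtain ⟨L, -, φ, hφ, hL⟩ := isCompact_univ.tendsto_subseq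
    (x := fun n i => γ n • t i) fun _ => mem_univ _
  have hLi (i : ι) : Tendsto (fun n => γ (φ n) • t i) atTop (𝓝 (L i)) := tendsto_pi_nhds.1 hL i
  have hL (i j k : ι) (hij : L i ≠ L j) (hik : L i ≠ L k) (hjk : L j ≠ L k) : False := by
    have ht {a b : ι} (hab : L a ≠ L b) : t a ≠ t b := fun h => hab (by rw [t.injective h])
    exact hPD.limit_notMem_tripSet (hγ.comp_injective hφ.injective)
      (p := fun _ => (t i, t j, t k)) tendsto_const_nhds ⟨ht hij, ht hik, ht hjk⟩
      ((hLi i).prodMk_nhds ((hLi j).prodMk_nhds (hLi k))) ⟨hij, hik, hjk⟩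
  obtain ⟨zp, hzp⟩ := exists_two_lt_card_fiber L hι hL
  refine ⟨φ, hφ, zp, (Finset.univ.filter (L · = zp)).map t, by rwa [Finset.card_map], ?_⟩
  simp only [Finset.mem_map, Finset.mem_filter, Finset.mem_univ, true_and]
  rintro _ ⟨i, rfl, rfl⟩
  exact hLi i

theorem eq_of_tendsto (hPD : ProperlyDiscontinuousOnTriples G Z) {γ : ℕ → G}
    (hγ : DivergesToInfinity γ) {zp zm : Z} {T W : Finset Z} (hT : 2 < T.card)
    (hTlim : ∀ z ∈ T, Tendsto (fun n => γ n • z) atTop (𝓝 zp)) (hW : 2 < W.card)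
    (hWlim : ∀ w ∈ W, Tendsto (fun n => (γ n)⁻¹ • w) atTop (𝓝 zm))
    {x : ℕ → Z} {a y : Z} (hx : Tendsto x atTop (𝓝 a)) (ha : a ≠ zm)
    (hy : Tendsto (fun n => γ n • x n) atTop (𝓝 y)) : y = zp := by
  classical
  by_contra hyzp
  obtain ⟨u, huT, hua, huzm⟩ := exists_mem_ne_ne_of_two_lt_card hT a zm
  obtain ⟨w, hwW, hwy, hwzp⟩ := exists_mem_ne_ne_of_two_lt_card hW y zp
  refine hPD.limit_notMem_tripSet hγ (p := fun n => (x n, u, (γ n)⁻¹ • w)) (Q := (y, zp, w))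
    (hx.prodMk_nhds (tendsto_const_nhds.prodMk_nhds (hWlim w hwW))) ⟨hua.symm, ha, huzm⟩ ?_
    ⟨hyzp, hwy.symm, hwzp.symm⟩
  simpa only [Prod.smul_mk, smul_inv_smul] using
    hy.prodMk_nhds ((hTlim u huT).prodMk_nhds tendsto_const_nhds)

theorem exists_subseq_tendstoUniformlyOn [CompactSpace Z]
    (hPD : ProperlyDiscontinuousOnTriples G Z) (hZ : (tripSet Z).Nonempty)
    {γ : ℕ → G} (hγ : DivergesToInfinity γ) :
    ∃ (zp zm : Z) (k : ℕ → ℕ), StrictMono k ∧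
      ∀ K : Set Z, IsCompact K → K ⊆ {zm}ᶜ →
        TendstoUniformlyOn (fun i z => γ (k i) • z) (fun _ => zp) atTop K := by
  cases finite_or_infinite Z
  · have := hPD.finite hZ
    obtain ⟨n, hn⟩ := hγ.exists_notMem Set.finite_univ
    exact absurd (mem_univ _) hn
  let t : Fin 5 ↪ Z := Fin.valEmbedding.trans (Infinite.natEmbedding Z)
  obtain ⟨φ₁, hφ₁, zp, T, hT, hTlim⟩ := hPD.exists_subseq_tendsto_of_embedding hγ t (by simp)
  obtain ⟨φ₂, hφ₂, zm, W, hW, hWlim⟩ := hPD.exists_subseq_tendsto_of_embedding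
    (hγ.comp_injective hφ₁.injective).inv t (by simp)
  refine ⟨zp, zm, φ₁ ∘ φ₂, hφ₁.comp hφ₂, fun K hK hKzm => ?_⟩
  refine tendstoUniformlyOn_const_of_forall_subseq hK fun ψ hψ x a y ha hx hy => ?_
  exact hPD.eq_of_tendsto (hγ.comp_injective (hφ₁.comp (hφ₂.comp hψ)).injective)
    hT (fun z hz => (hTlim z hz).comp (hφ₂.comp hψ).tendsto_atTop)
    hW (fun w hw => (hWlim w hw).comp hψ.tendsto_atTop) hx (hKzm ha) hy

end ProperlyDiscontinuousOnTriples

end ConvergenceAction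

theorem properly_discontinuous_on_triples_iff_convergence_general
    {G Z : Type*} [Group G] [MetricSpace Z] [CompactSpace Z] [MulAction G Z]
    (hcard : ∃ a b c : Z, a ≠ b ∧ a ≠ c ∧ b ≠ c) :
    (∀ K : Set (Z × Z × Z), K ⊆ tripSet Z → IsCompact K →
        {γ : G | ((fun p : Z × Z × Z => (γ • p.1, γ • p.2.1, γ • p.2.2)) '' K ∩ K).Nonempty}.Finite)
      ↔
    (∀ γ : ℕ → G, DivergesToInfinity γ →
      ∃ (zp zm : Z) (k : ℕ → ℕ), StrictMono k ∧
        ∀ K : Set Z, IsCompact K → K ⊆ {zm}ᶜ →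
          TendstoUniformlyOn (fun i z => γ (k i) • z) (fun _ => zp) atTop K) := by
  obtain ⟨a, b, c, hab, hac, hbc⟩ := hcard
  change ProperlyDiscontinuousOnTriples G Z ↔ _
  exact ⟨fun hPD _ hγ => hPD.exists_subseq_tendstoUniformlyOn ⟨(a, b, c), hab, hac, hbc⟩ hγ,
    ProperlyDiscontinuousOnTriples.of_forall_exists_subseq⟩

/-- The two definitions of a convergence action are equivalent: the diagonal action on the
space of triples of pairwise distinct points is properly discontinuous if and only if every
sequence diverging to infinity has a subsequence converging, uniformly on compact subsets of
the complement of an exceptional point, to a constant map. -/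
theorem properly_discontinuous_on_triples_iff_convergence
    {G Z : Type*} [Group G] [MetricSpace Z] [CompactSpace Z] [MulAction G Z]
    (hcont : ∀ γ : G, Continuous fun z : Z => γ • z)
    (hcard : ∃ a b c : Z, a ≠ b ∧ a ≠ c ∧ b ≠ c) :
    (∀ K : Set (Z × Z × Z), K ⊆ tripSet Z → IsCompact K →
        {γ : G | ((fun p : Z × Z × Z => (γ • p.1, γ • p.2.1, γ • p.2.2)) '' K ∩ K).Nonempty}.Finite)
      ↔
    (∀ γ : ℕ → G, DivergesToInfinity γ →
      ∃ (zp zm : Z) (k : ℕ → ℕ), StrictMono k ∧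
        ∀ K : Set Z, IsCompact K → K ⊆ {zm}ᶜ →
          TendstoUniformlyOn (fun i z => γ (k i) • z) (fun _ => zp) atTop K) :=
  properly_discontinuous_on_triples_iff_convergence_general hcard
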